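/- Graver's optimality criterion: a feasible point x* of the integer program min{cᵀx : Ax = b, l ≤ x ≤ u, x ∈ ℤ^n} is optimal if and only if there is no g ∈ G(A) such that x* + g is feasible and cᵀ(x* + g) < cᵀx*. -/
import Mathlib

/-- The conformal partial order on integer vectors. -/
def Conf {ι : Type*} (x y : ι → ℤ) : Prop :=
  ∀ i, |x i| ≤ |y i| ∧ 0 ≤ x i * y i

/-- The Graver basis of an integer matrix `A`. -/
def graverBasis {κ ι : Type*} [Fintype ι] (A : Matrix κ ι ℤ) : Set (ι → ℤ) :=
  {g | A.mulVec g = 0 ∧ g ≠ 0 ∧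
    ∀ y : ι → ℤ, A.mulVec y = 0 → y ≠ 0 → Conf y g → y = g}

lemma confInterval {a b : ℤ} (h1 : |a| ≤ |b|) (h2 : 0 ≤ a * b) :
    (0 ≤ b → 0 ≤ a ∧ a ≤ b) ∧ (b ≤ 0 → b ≤ a ∧ a ≤ 0) := by
  constructor
  · intro hb
    rcases hb.lt_or_eq with hb | hb
    · have ha : 0 ≤ a := by
        by_contra h
        push_neg at h
        exact absurd h2 (not_le.mpr (mul_neg_of_neg_of_pos h hb))
      refine ⟨ha, ?_⟩
      calc a ≤ |a| := le_abs_self a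
        _ ≤ |b| := h1
        _ = b := abs_of_nonneg hb.le
    · rw [← hb] at h1
      simp only [abs_zero] at h1
      have h0 : |a| = 0 := le_antisymm h1 (abs_nonneg a)
      have := abs_eq_zero.mp h0
      omega
  · intro hb
    rcases hb.lt_or_eq with hb | hb
    · have ha : a ≤ 0 := by
        by_contra h
        push_neg at h
        exact absurd h2 (not_le.mpr (mul_neg_of_pos_of_neg h hb))
      refine ⟨?_, ha⟩
      have h3 : -a ≤ |a| := neg_le_abs a
      have h4 : |b| = -b := abs_of_neg hb
      omega
    · have h0 : |a| = 0 := by rw [hb] at h1; simpa using h1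
      have := abs_eq_zero.mp h0
      omega

lemma conf_trans {ι : Type*} {x y z : ι → ℤ} (h1 : Conf x y) (h2 : Conf y z) : Conf x z := by
  intro i
  obtain ⟨ha1, hs1⟩ := h1 i
  obtain ⟨ha2, hs2⟩ := h2 i
  refine ⟨le_trans ha1 ha2, ?_⟩
  rcases eq_or_ne (y i) 0 with hy | hy
  · have hx : x i = 0 := by
      rw [hy] at ha1
      exact abs_eq_zero.mp (le_antisymm (by simpa using ha1) (abs_nonneg _))
    simp [hx]
  · have hy2 : 0 < y i * y i := mul_self_pos.mpr hy
    nlinarith [mul_nonneg hs1 hs2]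

lemma conf_strict {a b : ℤ} (h1 : |a| ≤ |b|) (h2 : 0 ≤ a * b) (h3 : a ≠ b) :
    a.natAbs < b.natAbs := by
  obtain ⟨hp, hn⟩ := confInterval h1 h2
  rcases le_total 0 b with hb | hb
  · obtain ⟨hu, hv⟩ := hp hb; omega
  · obtain ⟨hu, hv⟩ := hn hb; omega

lemma exists_graver_conf {κ : Type*} {n : ℕ} (A : Matrix κ (Fin n) ℤ) :
    ∀ N (z : Fin n → ℤ), (∑ i, (z i).natAbs) = N → A.mulVec z = 0 → z ≠ 0 →
      ∃ g ∈ graverBasis A, Conf g z := by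
  intro N
  induction N using Nat.strong_induction_on with
  | _ N ih =>
    intro z hN hz hz0
    by_cases hmin : ∀ y : Fin n → ℤ, A.mulVec y = 0 → y ≠ 0 → Conf y z → y = z
    · exact ⟨z, ⟨hz, hz0, hmin⟩, fun i => ⟨le_refl _, mul_self_nonneg _⟩⟩
    · push_neg at hmin
      obtain ⟨y, hy, hy0, hyz, hne⟩ := hmin
      have hlt : (∑ i, (y i).natAbs) < N := by
        rw [← hN]
        obtain ⟨j, hj⟩ : ∃ j, y j ≠ z j := by
          by_contra h; push_neg at h; exact hne (funext h)
        refine Finset.sum_lt_sum (fun i _ => ?_) ⟨j, Finset.mem_univ j, ?_⟩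
        · have ha := (hyz i).1
          rw [Int.abs_eq_natAbs, Int.abs_eq_natAbs] at ha
          exact_mod_cast ha
        · exact conf_strict (hyz j).1 (hyz j).2 hj
      obtain ⟨g, hg, hgy⟩ := ih _ hlt y rfl hy hy0
      exact ⟨g, hg, conf_trans hgy hyz⟩

lemma improve {κ : Type*} {n : ℕ} (A : Matrix κ (Fin n) ℤ)
    (l u c xs : Fin n → ℤ) (hxl : l ≤ xs) (hxu : xs ≤ u) :
    ∀ N (z : Fin n → ℤ), (∑ i, (z i).natAbs) = N → A.mulVec z = 0 →
      l ≤ xs + z → xs + z ≤ u → (∑ i, c i * z i) < 0 →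
      ∃ g ∈ graverBasis A, l ≤ xs + g ∧ xs + g ≤ u ∧ (∑ i, c i * g i) < 0 := by
  intro N
  induction N using Nat.strong_induction_on with
  | _ N ih =>
    intro z hN hz hl hu hc
    have hz0 : z ≠ 0 := by rintro rfl; simp at hc
    obtain ⟨g, hg, hgz⟩ := exists_graver_conf A _ z rfl hz hz0
    have hint : ∀ i, (0 ≤ z i → 0 ≤ g i ∧ g i ≤ z i) ∧ (z i ≤ 0 → z i ≤ g i ∧ g i ≤ 0) :=
      fun i => confInterval (hgz i).1 (hgz i).2
    have hfl : l ≤ xs + g := by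
      intro i
      have h1 := hl i
      have h2 := hint i
      have h3 := hxl i
      simp only [Pi.add_apply] at *
      rcases le_total 0 (z i) with h | h
      · have := (h2.1 h).1; linarith
      · obtain ⟨u1, u2⟩ := h2.2 h; linarith
    have hfu : xs + g ≤ u := by
      intro i
      have h1 := hu i
      have h2 := hint i
      have h3 := hxu i
      simp only [Pi.add_apply] at *
      rcases le_total 0 (z i) with h | h
      · obtain ⟨u1, u2⟩ := h2.1 h; linarith
      · have := (h2.2 h).2; linarith
    rcases lt_or_ge (∑ i, c i * g i) 0 with hcg | hcg
    · exact ⟨g, hg, hfl, hfu, hcg⟩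
    · -- recurse on z - g
      have hz' : A.mulVec (z - g) = 0 := by
        rw [Matrix.mulVec_sub, hz, hg.1, sub_zero]
      have hint' : ∀ i, (0 ≤ z i → 0 ≤ z i - g i ∧ z i - g i ≤ z i) ∧
          (z i ≤ 0 → z i ≤ z i - g i ∧ z i - g i ≤ 0) := by
        intro i
        have h2 := hint i
        constructor
        · intro h; obtain ⟨u1, u2⟩ := h2.1 h; omega
        · intro h; obtain ⟨u1, u2⟩ := h2.2 h; omega
      have hl' : l ≤ xs + (z - g) := by
        intro i
        have h1 := hl i
        have h3 := hxl i
        have h2 := hint' i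
        simp only [Pi.add_apply, Pi.sub_apply] at *
        rcases le_total 0 (z i) with h | h
        · have := (h2.1 h).1; linarith
        · obtain ⟨u1, u2⟩ := h2.2 h; linarith
      have hu' : xs + (z - g) ≤ u := by
        intro i
        have h1 := hu i
        have h3 := hxu i
        have h2 := hint' i
        simp only [Pi.add_apply, Pi.sub_apply] at *
        rcases le_total 0 (z i) with h | h
        · obtain ⟨u1, u2⟩ := h2.1 h; linarith
        · have := (h2.2 h).2; linarith
      have hc' : (∑ i, c i * (z - g) i) < 0 := by
        have : (∑ i, c i * (z - g) i) = (∑ i, c i * z i) - (∑ i, c i * g i) := by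
          rw [← Finset.sum_sub_distrib]
          congr 1; funext i; simp [Pi.sub_apply]; ring
        rw [this]; linarith
      have hmeas : (∑ i, ((z - g) i).natAbs) < N := by
        rw [← hN]
        obtain ⟨j, hj⟩ : ∃ j, g j ≠ 0 := by
          by_contra h; push_neg at h; exact hg.2.1 (funext h)
        refine Finset.sum_lt_sum (fun i _ => ?_) ⟨j, Finset.mem_univ j, ?_⟩
        · have h2 := hint i
          simp only [Pi.sub_apply]
          rcases le_total 0 (z i) with h | h
          · obtain ⟨u1, u2⟩ := h2.1 h; omega
          · obtain ⟨u1, u2⟩ := h2.2 h; omega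
        · have h2 := hint j
          simp only [Pi.sub_apply]
          rcases le_total 0 (z j) with h | h
          · obtain ⟨u1, u2⟩ := h2.1 h; omega
          · obtain ⟨u1, u2⟩ := h2.2 h; omega
      exact ih _ hmeas (z - g) rfl hz' hl' hu' hc'

/-- Graver's optimality criterion: a feasible point `xs` of
`min {cᵀx : Ax = b, l ≤ x ≤ u, x ∈ ℤ^n}` is optimal iff there is no Graver basis
element `g` such that `xs + g` is feasible and has strictly smaller objective value. -/
theorem graver_optimality (m n : ℕ) (A : Matrix (Fin m) (Fin n) ℤ)
    (b : Fin m → ℤ) (l u c : Fin n → ℤ) (xs : Fin n → ℤ)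
    (hfeas : A.mulVec xs = b ∧ l ≤ xs ∧ xs ≤ u) :
    (∀ x : Fin n → ℤ, A.mulVec x = b → l ≤ x → x ≤ u →
        (∑ i, c i * xs i) ≤ (∑ i, c i * x i)) ↔
    ¬ ∃ g ∈ graverBasis A,
        (A.mulVec (xs + g) = b ∧ l ≤ xs + g ∧ xs + g ≤ u) ∧
        (∑ i, c i * (xs i + g i)) < (∑ i, c i * xs i) := by
  obtain ⟨hAxs, hxl, hxu⟩ := hfeas
  constructor
  · rintro hopt ⟨g, hg, ⟨hA', hl', hu'⟩, hlt⟩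
    have := hopt (xs + g) hA' hl' hu'
    simp only [Pi.add_apply] at this
    linarith
  · intro hno x hAx hlx hxu'
    by_contra h
    push_neg at h
    have hz : A.mulVec (x - xs) = 0 := by
      rw [Matrix.mulVec_sub, hAx, hAxs, sub_self]
    have hlz : l ≤ xs + (x - xs) := by simpa using hlx
    have huz : xs + (x - xs) ≤ u := by simpa using hxu'
    have hcz : (∑ i, c i * (x - xs) i) < 0 := by
      have : (∑ i, c i * (x - xs) i) = (∑ i, c i * x i) - (∑ i, c i * xs i) := by
        rw [← Finset.sum_sub_distrib]
        congr 1; funext i; simp [Pi.sub_apply]; ring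
      rw [this]; linarith
    obtain ⟨g, hg, hgl, hgu, hgc⟩ := improve A l u c xs hxl hxu _ (x - xs) rfl hz hlz huz hcz
    refine hno ⟨g, hg, ⟨?_, hgl, hgu⟩, ?_⟩
    · rw [Matrix.mulVec_add, hAxs, hg.1, add_zero]
    · have : (∑ i, c i * (xs i + g i)) = (∑ i, c i * xs i) + (∑ i, c i * g i) := by
        rw [← Finset.sum_add_distrib]
        congr 1; funext i; ring
      rw [this]; linarith
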